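/- arXiv:1405.2652 — 6 statements merged into one kernel-verified Lean document; each statement's English description precedes it below -/
import Mathlib

section
/- Let S be a finite nonempty set, let r, r̄ : S → ℝ be reward functions, and let p, p̄ : S → S → ℝ be row-stochastic matrices. Suppose ρ ∈ ℝ and λ : S → ℝ satisfy the Poisson equation for (r, p): for all s ∈ S, ρ + λ(s) = r(s) + Σ_{s'} p(s,s')·λ(s'); suppose span(λ) ≤ D for some D ≥ 0; suppose for every s ∈ S, |r(s) − r̄(s)| < ε and Σ_{s'} |p(s,s') − p̄(s,s')| < ε for some ε > 0; and let μ̄ : S → ℝ be a stationary distribution of p̄. Then |ρ − Σ_s μ̄(s)·r̄(s)| ≤ ε·(D + 1). -/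
open Finset

/-- Average-reward perturbation lemma (Lemma 2 of the paper, fixed-policy form):
if `(ρ, λ)` solves the Poisson equation for `(r, p)`, `span λ ≤ D`, and `(r̄, p̄)` is an
entrywise (resp. row-ℓ1) `ε`-perturbation of `(r, p)`, then the stationary average reward
of `(r̄, p̄)` is within `ε (D + 1)` of `ρ`. -/
theorem average_reward_perturbation
    {S : Type*} [Fintype S] [Nonempty S]
    (r rbar : S → ℝ) (p pbar : S → S → ℝ)
    (hp0 : ∀ s s', 0 ≤ p s s') (hp1 : ∀ s, ∑ s', p s s' = 1)
    (hpbar0 : ∀ s s', 0 ≤ pbar s s') (hpbar1 : ∀ s, ∑ s', pbar s s' = 1)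
    (ρ D ε : ℝ) (lam : S → ℝ)
    (hPoisson : ∀ s, ρ + lam s = r s + ∑ s', p s s' * lam s')
    (hD : 0 ≤ D)
    (hspan : univ.sup' univ_nonempty lam - univ.inf' univ_nonempty lam ≤ D)
    (hε : 0 < ε)
    (hr : ∀ s, |r s - rbar s| < ε)
    (hpdiff : ∀ s, ∑ s', |p s s' - pbar s s'| < ε)
    (μbar : S → ℝ)
    (hμ0 : ∀ s, 0 ≤ μbar s) (hμ1 : ∑ s, μbar s = 1)
    (hμstat : ∀ s', ∑ s, μbar s * pbar s s' = μbar s') :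
    |ρ - ∑ s, μbar s * rbar s| ≤ ε * (D + 1) := by
  set c := univ.inf' univ_nonempty lam with hc
  have hlamb : ∀ s : S, |lam s - c| ≤ D := by
    intro s
    have h0 : c ≤ lam s := inf'_le _ (mem_univ s)
    have h1 : lam s ≤ univ.sup' univ_nonempty lam := le_sup' _ (mem_univ s)
    rw [abs_of_nonneg (sub_nonneg.2 h0)]
    linarith
  have key : ρ - ∑ s, μbar s * rbar s
      = ∑ s, μbar s * ((r s - rbar s) + ∑ s', (p s s' - pbar s s') * (lam s' - c)) := by
    have e1 : ∀ s, ∑ s', (p s s' - pbar s s') * (lam s' - c)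
        = (∑ s', p s s' * lam s') - (∑ s', pbar s s' * lam s') := by
      intro s
      have h : ∀ s', (p s s' - pbar s s') * (lam s' - c)
          = p s s' * lam s' - pbar s s' * lam s' - (p s s' * c - pbar s s' * c) := by
        intro s'; ring
      simp only [h, Finset.sum_sub_distrib, ← Finset.sum_mul, hp1, hpbar1]
      ring
    have e2 : ∑ s, μbar s * ∑ s', pbar s s' * lam s' = ∑ s, μbar s * lam s := by
      calc ∑ s, μbar s * ∑ s', pbar s s' * lam s'
          = ∑ s, ∑ s', μbar s * pbar s s' * lam s' := by
            simp [Finset.mul_sum, mul_assoc]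
        _ = ∑ s', (∑ s, μbar s * pbar s s') * lam s' := by
            rw [Finset.sum_comm]; simp [Finset.sum_mul]
        _ = ∑ s', μbar s' * lam s' := by simp [hμstat]
    have e3 : ∑ s, μbar s * ∑ s', p s s' * lam s'
        = ∑ s, μbar s * (ρ + lam s - r s) := by
      apply Finset.sum_congr rfl
      intro s _
      have := hPoisson s
      congr 1
      linarith
    calc ρ - ∑ s, μbar s * rbar s
        = ∑ s, μbar s * ρ - ∑ s, μbar s * rbar s := by
          rw [← Finset.sum_mul, hμ1, one_mul]
      _ = ∑ s, μbar s * (r s - rbar s)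
          + (∑ s, μbar s * (ρ + lam s - r s) - ∑ s, μbar s * lam s) := by
          simp only [mul_sub, mul_add, Finset.sum_sub_distrib, Finset.sum_add_distrib]
          ring
      _ = ∑ s, μbar s * (r s - rbar s)
          + (∑ s, μbar s * ∑ s', p s s' * lam s' - ∑ s, μbar s * ∑ s', pbar s s' * lam s') := by
          rw [e2, e3]
      _ = ∑ s, μbar s * ((r s - rbar s) + ∑ s', (p s s' - pbar s s') * (lam s' - c)) := by
          have e5 : ∑ s, μbar s * ((r s - rbar s) + ∑ s', (p s s' - pbar s s') * (lam s' - c))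
              = ∑ s, μbar s * ((r s - rbar s)
                + ((∑ s', p s s' * lam s') - ∑ s', pbar s s' * lam s')) :=
            Finset.sum_congr rfl fun s _ => by rw [e1 s]
          rw [e5]
          simp only [mul_add, mul_sub, Finset.sum_add_distrib, Finset.sum_sub_distrib]
  rw [key]
  calc |∑ s, μbar s * ((r s - rbar s) + ∑ s', (p s s' - pbar s s') * (lam s' - c))|
      ≤ ∑ s, |μbar s * ((r s - rbar s) + ∑ s', (p s s' - pbar s s') * (lam s' - c))| :=
        Finset.abs_sum_le_sum_abs _ _
    _ ≤ ∑ s, μbar s * (ε * (D + 1)) := by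
        apply Finset.sum_le_sum
        intro s _
        rw [abs_mul, abs_of_nonneg (hμ0 s)]
        apply mul_le_mul_of_nonneg_left _ (hμ0 s)
        have h2 : |∑ s', (p s s' - pbar s s') * (lam s' - c)| ≤ ε * D := by
          calc |∑ s', (p s s' - pbar s s') * (lam s' - c)|
              ≤ ∑ s', |(p s s' - pbar s s') * (lam s' - c)| :=
                Finset.abs_sum_le_sum_abs _ _
            _ ≤ ∑ s', |p s s' - pbar s s'| * D := by
                apply Finset.sum_le_sum
                intro s' _
                rw [abs_mul]
                exact mul_le_mul_of_nonneg_left (hlamb s') (abs_nonneg _)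
            _ = (∑ s', |p s s' - pbar s s'|) * D := by rw [Finset.sum_mul]
            _ ≤ ε * D := mul_le_mul_of_nonneg_right (le_of_lt (hpdiff s)) hD
        have h3 := abs_add_le (r s - rbar s) (∑ s', (p s s' - pbar s s') * (lam s' - c))
        have h4 := hr s
        nlinarith [abs_nonneg (r s - rbar s)]
    _ = ε * (D + 1) := by rw [← Finset.sum_mul, hμ1, one_mul]
end

section
/- Let S and S̄ be finite nonempty sets and let α : S → S̄ be a surjective map. Let q : S → ℝ and q̄ : S̄ → ℝ be probability vectors (entrywise nonnegative and summing to 1), and suppose that for some ε > 0, Σ_{ṡ ∈ S̄} |q̄(ṡ) − Σ_{s : α(s) = ṡ} q(s)| < ε. Then there exists a probability vector q' : S → ℝ such that Σ_{s : α(s) = ṡ} q'(s) = q̄(ṡ) for every ṡ ∈ S̄, and Σ_{s} |q(s) − q'(s)| < ε. -/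
open Finset

/-- Mass-redistribution within fibers (key construction in the proof of Theorem 1):
if the aggregation of a probability vector `q` on `S` under a surjection `α : S → S̄` is
`ε`-close in ℓ1 to a probability vector `q̄` on `S̄`, then there is a probability vector
`q'` on `S` whose aggregation equals `q̄` exactly and with `‖q - q'‖₁ < ε`. -/
theorem exists_redistributed_prob_vector
    {S Sb : Type*} [Fintype S] [Nonempty S] [Fintype Sb] [Nonempty Sb] [DecidableEq Sb]
    (α : S → Sb) (hα : Function.Surjective α)
    (q : S → ℝ) (qbar : Sb → ℝ)
    (hq0 : ∀ s, 0 ≤ q s) (hq1 : ∑ s, q s = 1)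
    (hqbar0 : ∀ sb, 0 ≤ qbar sb) (hqbar1 : ∑ sb, qbar sb = 1)
    (ε : ℝ) (hε : 0 < ε)
    (hclose : ∑ sb, |qbar sb - ∑ s ∈ univ.filter (fun s => α s = sb), q s| < ε) :
    ∃ q' : S → ℝ, (∀ s, 0 ≤ q' s) ∧ (∑ s, q' s = 1) ∧
      (∀ sb, ∑ s ∈ univ.filter (fun s => α s = sb), q' s = qbar sb) ∧
      ∑ s, |q s - q' s| < ε := by
  classical
  set Q : Sb → ℝ := fun sb => ∑ s ∈ univ.filter (fun s => α s = sb), q s with hQdef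
  have hQ0 : ∀ sb, 0 ≤ Q sb := fun sb => Finset.sum_nonneg fun s _ => hq0 s
  have hcard : ∀ sb : Sb, 0 < ((univ : Finset S).filter (fun s => α s = sb)).card := by
    intro sb
    obtain ⟨s, hs⟩ := hα sb
    exact Finset.card_pos.2 ⟨s, by simp [hs]⟩
  have hzero : ∀ sb, Q sb = 0 → ∀ s ∈ (univ : Finset S).filter (fun s => α s = sb), q s = 0 :=
    fun sb h => (Finset.sum_eq_zero_iff_of_nonneg (fun s _ => hq0 s)).1 h
  set q' : S → ℝ := fun s =>
    if Q (α s) = 0 then qbar (α s) / ((univ : Finset S).filter (fun t => α t = α s)).card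
    else q s * (qbar (α s) / Q (α s)) with hq'def
  have hq'0 : ∀ s, 0 ≤ q' s := by
    intro s
    rw [hq'def]
    dsimp only
    split
    · exact div_nonneg (hqbar0 _) (Nat.cast_nonneg _)
    · exact mul_nonneg (hq0 s) (div_nonneg (hqbar0 _) (hQ0 _))
  have hagg : ∀ sb, ∑ s ∈ univ.filter (fun s => α s = sb), q' s = qbar sb := by
    intro sb
    have hcongr : ∀ s ∈ (univ : Finset S).filter (fun s => α s = sb),
        q' s = if Q sb = 0 then qbar sb / ((univ : Finset S).filter (fun t => α t = sb)).card
          else q s * (qbar sb / Q sb) := by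
      intro s hs
      simp only [Finset.mem_filter] at hs
      rw [hq'def]
      simp only [hs.2]
    rw [Finset.sum_congr rfl hcongr]
    by_cases h : Q sb = 0
    · have hc : (((univ : Finset S).filter (fun t => α t = sb)).card : ℝ) ≠ 0 := by
        exact_mod_cast (hcard sb).ne'
      simp only [h, if_true, Finset.sum_const, nsmul_eq_mul]
      field_simp
    · simp only [h, if_false]
      rw [← Finset.sum_mul]
      show Q sb * (qbar sb / Q sb) = qbar sb
      field_simp
  have hsum1 : ∑ s, q' s = 1 := by
    rw [← Finset.sum_fiberwise univ α q']
    simp only [hagg, hqbar1]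
  have hfib : ∀ sb, ∑ s ∈ univ.filter (fun s => α s = sb), |q s - q' s| = |qbar sb - Q sb| := by
    intro sb
    by_cases h : Q sb = 0
    · have hq0' := hzero sb h
      have hcongr : ∀ s ∈ (univ : Finset S).filter (fun s => α s = sb),
          |q s - q' s| = qbar sb / ((univ : Finset S).filter (fun t => α t = sb)).card := by
        intro s hs
        have hz := hq0' s hs
        simp only [Finset.mem_filter] at hs
        rw [hq'def]
        simp only [hs.2, h, if_true, hz, zero_sub, abs_neg]
        exact abs_of_nonneg (div_nonneg (hqbar0 _) (Nat.cast_nonneg _))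
      rw [Finset.sum_congr rfl hcongr, Finset.sum_const, nsmul_eq_mul]
      have hc : (((univ : Finset S).filter (fun t => α t = sb)).card : ℝ) ≠ 0 := by
        exact_mod_cast (hcard sb).ne'
      rw [h, sub_zero, abs_of_nonneg (hqbar0 sb)]
      field_simp
    · have hcongr : ∀ s ∈ (univ : Finset S).filter (fun s => α s = sb),
          |q s - q' s| = q s * |1 - qbar sb / Q sb| := by
        intro s hs
        simp only [Finset.mem_filter] at hs
        rw [hq'def]
        simp only [hs.2, h, if_false]
        rw [← mul_one_sub, abs_mul, abs_of_nonneg (hq0 s)]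
      rw [Finset.sum_congr rfl hcongr, ← Finset.sum_mul]
      show Q sb * |1 - qbar sb / Q sb| = |qbar sb - Q sb|
      rw [← abs_of_nonneg (hQ0 sb), ← abs_mul]
      rw [abs_of_nonneg (hQ0 sb)]
      rw [mul_sub, mul_one, mul_div_cancel₀ _ h, ← abs_neg]
      ring_nf
  refine ⟨q', hq'0, hsum1, hagg, ?_⟩
  rw [← Finset.sum_fiberwise univ α (fun s => |q s - q' s|)]
  simpa only [hfib] using hclose
end

section
/- Let S be a finite nonempty set and A a finite nonempty set of actions. Let r, r̄ : S → A → ℝ and let p, p̄ : S → A → S → ℝ be such that p(s,a,·) and p̄(s,a,·) are probability vectors on S for all s, a. Suppose for some ε > 0: for all s, a, |r(s,a) − r̄(s,a)| < ε and Σ_{s'} |p(s,a,s') − p̄(s,a,s')| < ε. Suppose ρ ∈ ℝ and λ : S → ℝ satisfy the average-reward optimality equation for (r,p): for all s, ρ + λ(s) = max_{a ∈ A} [r(s,a) + Σ_{s'} p(s,a,s')·λ(s')], with span(λ) ≤ D, and let π : S → A be such that π(s) attains this maximum for each s. Suppose ρ̄ ∈ ℝ and λ̄ : S → ℝ satisfy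 for all s and all a: ρ̄ + λ̄(s) ≥ r̄(s,a) + Σ_{s'} p̄(s,a,s')·λ̄(s'). Let μ̄ be a stationary distribution of the row-stochastic matrix (s,s') ↦ p̄(s,π(s),s'). Then |ρ − Σ_s μ̄(s)·r̄(s,π(s))| ≤ ε·(D+1), and consequently ρ̄ ≥ ρ − ε·(D+1). -/
open Finset

/-- Lemma 2 of the paper in Bellman-equation form (same state space): if `(ρ, λ, π)` solve
the average-reward optimality equation for the MDP `(r, p)` with `span λ ≤ D`, the MDP
`(r̄, p̄)` is an `ε`-approximation of `(r, p)` over the same state space, and `(ρ̄, λ̄)` is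
superharmonic for `(r̄, p̄)`, then the stationary average reward of `π` on `(r̄, p̄)` is
within `ε (D + 1)` of `ρ`, and `ρ̄ ≥ ρ - ε (D + 1)`. -/
theorem bellman_epsilon_approximation_same_state_space
    {S A : Type*} [Fintype S] [Nonempty S] [Fintype A] [Nonempty A]
    (r rbar : S → A → ℝ) (p pbar : S → A → S → ℝ)
    (hp0 : ∀ s a s', 0 ≤ p s a s') (hp1 : ∀ s a, ∑ s', p s a s' = 1)
    (hpbar0 : ∀ s a s', 0 ≤ pbar s a s') (hpbar1 : ∀ s a, ∑ s', pbar s a s' = 1)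
    (ε : ℝ) (hε : 0 < ε)
    (hr : ∀ s a, |r s a - rbar s a| < ε)
    (hpdiff : ∀ s a, ∑ s', |p s a s' - pbar s a s'| < ε)
    (ρ D : ℝ) (lam : S → ℝ)
    (hOpt : ∀ s, ρ + lam s =
      univ.sup' univ_nonempty (fun a => r s a + ∑ s', p s a s' * lam s'))
    (hspan : univ.sup' univ_nonempty lam - univ.inf' univ_nonempty lam ≤ D)
    (π : S → A)
    (hπ : ∀ s, r s (π s) + ∑ s', p s (π s) s' * lam s' =
      univ.sup' univ_nonempty (fun a => r s a + ∑ s', p s a s' * lam s'))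
    (ρbar : ℝ) (lambar : S → ℝ)
    (hOptbar : ∀ s a, ρbar + lambar s ≥ rbar s a + ∑ s', pbar s a s' * lambar s')
    (μbar : S → ℝ)
    (hμ0 : ∀ s, 0 ≤ μbar s) (hμ1 : ∑ s, μbar s = 1)
    (hμstat : ∀ s', ∑ s, μbar s * pbar s (π s) s' = μbar s') :
    |ρ - ∑ s, μbar s * rbar s (π s)| ≤ ε * (D + 1) ∧ ρbar ≥ ρ - ε * (D + 1) := by

  classical
  set c := univ.inf' univ_nonempty lam with hc
  obtain ⟨s₀⟩ := (inferInstance : Nonempty S)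
  have hcs : ∀ s : S, c ≤ lam s := fun s => inf'_le _ (mem_univ s)
  have hsups : ∀ s : S, lam s ≤ univ.sup' univ_nonempty lam := fun s => le_sup' _ (mem_univ s)
  have hDnn : 0 ≤ D := by
    have := hcs s₀; have := hsups s₀; linarith
  have hlam : ∀ s, |lam s - c| ≤ D := by
    intro s
    rw [abs_le]
    constructor
    · have := hcs s; linarith
    · have := hsups s; have := hcs s₀; linarith
  -- key per-state bound on transition difference
  have hpb : ∀ s, |∑ s', (p s (π s) s' - pbar s (π s) s') * lam s'| ≤ ε * D := by
    intro s
    have hsum0 : ∑ s', (p s (π s) s' - pbar s (π s) s') = 0 := by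
      rw [sum_sub_distrib, hp1, hpbar1]; ring
    have heq : ∑ s', (p s (π s) s' - pbar s (π s) s') * lam s'
        = ∑ s', (p s (π s) s' - pbar s (π s) s') * (lam s' - c) := by
      simp only [mul_sub]
      rw [sum_sub_distrib, ← sum_mul, hsum0]
      ring
    rw [heq]
    calc |∑ s', (p s (π s) s' - pbar s (π s) s') * (lam s' - c)|
        ≤ ∑ s', |(p s (π s) s' - pbar s (π s) s') * (lam s' - c)| := abs_sum_le_sum_abs _ _
      _ ≤ ∑ s', |p s (π s) s' - pbar s (π s) s'| * D := by
          apply sum_le_sum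
          intro s' _
          rw [abs_mul]
          exact mul_le_mul_of_nonneg_left (hlam s') (abs_nonneg _)
      _ = (∑ s', |p s (π s) s' - pbar s (π s) s'|) * D := by rw [sum_mul]
      _ ≤ ε * D := mul_le_mul_of_nonneg_right (le_of_lt (hpdiff s (π s))) hDnn
  -- per-state bound
  have hkey : ∀ s, |ρ - rbar s (π s) - (∑ s', pbar s (π s) s' * lam s' - lam s)|
      ≤ ε * (D + 1) := by
    intro s
    have hρ : ρ + lam s = r s (π s) + ∑ s', p s (π s) s' * lam s' := by
      rw [hOpt s, ← hπ s]
    have hrewr : ρ - rbar s (π s) - (∑ s', pbar s (π s) s' * lam s' - lam s)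
        = (r s (π s) - rbar s (π s))
          + ∑ s', (p s (π s) s' - pbar s (π s) s') * lam s' := by
      simp only [sub_mul, sum_sub_distrib]
      linarith
    rw [hrewr]
    have h1 := hr s (π s)
    have h2 := hpb s
    calc |(r s (π s) - rbar s (π s)) + ∑ s', (p s (π s) s' - pbar s (π s) s') * lam s'|
        ≤ |r s (π s) - rbar s (π s)| + |∑ s', (p s (π s) s' - pbar s (π s) s') * lam s'| :=
          abs_add_le _ _
      _ ≤ ε * (D + 1) := by linarith
  -- stationarity identity for any f
  have hg0 : ∀ f : S → ℝ,
      ∑ s, μbar s * ∑ s', pbar s (π s) s' * f s' = ∑ s, μbar s * f s := by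
    intro f
    calc ∑ s, μbar s * ∑ s', pbar s (π s) s' * f s'
        = ∑ s, ∑ s', (μbar s * pbar s (π s) s') * f s' := by
          simp only [mul_sum, mul_assoc]
      _ = ∑ s', (∑ s, μbar s * pbar s (π s) s') * f s' := by
          rw [sum_comm]
          simp only [sum_mul]
      _ = ∑ s', μbar s' * f s' := by
          apply sum_congr rfl
          intro s' _
          rw [hμstat s']
  set X := ∑ s, μbar s * rbar s (π s) with hX
  have habs : |ρ - X| ≤ ε * (D + 1) := by
    have hdecomp : ρ - X
        = ∑ s, μbar s * (ρ - rbar s (π s) - (∑ s', pbar s (π s) s' * lam s' - lam s)) := by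
      simp only [mul_sub, sum_sub_distrib, hg0 lam, ← sum_mul, hμ1, hX]
      ring
    rw [hdecomp]
    calc |∑ s, μbar s * (ρ - rbar s (π s) - (∑ s', pbar s (π s) s' * lam s' - lam s))|
        ≤ ∑ s, |μbar s * (ρ - rbar s (π s) - (∑ s', pbar s (π s) s' * lam s' - lam s))| :=
          abs_sum_le_sum_abs _ _
      _ ≤ ∑ s, μbar s * (ε * (D + 1)) := by
          apply sum_le_sum
          intro s _
          rw [abs_mul, abs_of_nonneg (hμ0 s)]
          exact mul_le_mul_of_nonneg_left (hkey s) (hμ0 s)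
      _ = ε * (D + 1) := by rw [← sum_mul, hμ1, one_mul]
  have hXle : ρbar ≥ X := by
    have hsum : ∑ s, μbar s * (ρbar + lambar s)
        ≥ ∑ s, μbar s * (rbar s (π s) + ∑ s', pbar s (π s) s' * lambar s') := by
      apply sum_le_sum
      intro s _
      exact mul_le_mul_of_nonneg_left (hOptbar s (π s)) (hμ0 s)
    have hL : ∑ s, μbar s * (ρbar + lambar s) = ρbar + ∑ s, μbar s * lambar s := by
      simp only [mul_add]
      rw [sum_add_distrib, ← sum_mul, hμ1]
      ring
    have hR : ∑ s, μbar s * (rbar s (π s) + ∑ s', pbar s (π s) s' * lambar s')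
        = X + ∑ s, μbar s * lambar s := by
      simp only [mul_add]
      rw [sum_add_distrib, hg0 lambar, hX]
    rw [hL, hR] at hsum
    linarith
  refine ⟨habs, ?_⟩
  have := abs_le.mp habs
  linarith [this.2]
end

section
/- Let S, S̄ be finite nonempty sets, A a finite nonempty set of actions, and α : S → S̄ a surjective map. Let r : S → A → ℝ, r̄ : S̄ → A → ℝ, and let p : S → A → S → ℝ, p̄ : S̄ → A → S̄ → ℝ be such that p(s,a,·) and p̄(ṡ,a,·) are probability vectors. Suppose for some ε > 0, for all s ∈ S and a ∈ A: |r̄(α(s),a) − r(s,a)| < ε and Σ_{ṡ'} |p̄(α(s),a,ṡ') − Σ_{s' : α(s')=ṡ'} p(s,a,s')| < ε. Suppose ρ ∈ ℝ and λ : S → ℝ satisfy the average-reward optimality equation for (r,p): for all s, ρ + λ(s) = max_{a} [r(s,a) + Σ_{s'} p(s,a,s')·λ(s')], with span(λ) ≤ D, and π : S → A attains this maximum pointwise. Suppose ρ̄ ∈ ℝ and λ̄ : S̄ → ℝ satisfy for all ṡ ∈ S̄ and all a ∈ A: ρ̄ + λ̄(ṡ) ≥ r̄(ṡ,a) + Σ_{ṡ'}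 p̄(ṡ,a,ṡ')·λ̄(ṡ'). Finally, suppose p' : S → S → ℝ is a row-stochastic matrix such that for all s ∈ S and ṡ' ∈ S̄: Σ_{s' : α(s')=ṡ'} p'(s,s') = p̄(α(s),π(s),ṡ') and Σ_{s'} |p(s,π(s),s') − p'(s,s')| < ε, and let μ' be a stationary distribution of p'. Then ρ̄ ≥ ρ − ε·(D+1). -/
open Finset

/-!
Along `π`, the optimality equation gives `r(s, π s) = ρ + λ s - (p_π λ) s`, and replacing `p_π`
by `p'` costs at most `ε · span λ ≤ ε D`; averaging against the stationary distribution `μ'` of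
`p'` cancels the bias, so `ρ - ε D ≤ ∑ μ' r_π`. Conversely, since `p'` aggregates to
`p̄(α ·, π ·, ·)`, the superharmonic `(ρ̄, λ̄)` lifts to `ρ̄ + ε + λ̄ ∘ α ≥ r_π + p' (λ̄ ∘ α)`, and
averaging against `μ'` gives `∑ μ' r_π ≤ ρ̄ + ε`.
-/

section Averaging

variable {S : Type*} [Fintype S]

theorem sum_mul_comp_eq_sum_mul_of_sum_fiber_eq {Sb R : Type*} [Fintype Sb] [DecidableEq Sb]
    [CommSemiring R] {α : S → Sb} {q : S → R} {qb : Sb → R}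
    (hq : ∀ sb, ∑ s ∈ univ.filter (fun s => α s = sb), q s = qb sb) (g : Sb → R) :
    ∑ s, q s * g (α s) = ∑ sb, qb sb * g sb := by
  rw [← sum_fiberwise univ α]
  refine sum_congr rfl fun sb _ => ?_
  rw [← hq, sum_mul]
  exact sum_congr rfl fun s hs => by rw [(mem_filter.1 hs).2]

theorem sum_mul_sum_mul_eq_of_stationary {μ : S → ℝ} {P : S → S → ℝ}
    (hμ : ∀ s', ∑ s, μ s * P s s' = μ s') (f : S → ℝ) :
    ∑ s, μ s * ∑ s', P s s' * f s' = ∑ s, μ s * f s := by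
  simp_rw [mul_sum, ← mul_assoc]
  rw [sum_comm]
  simp_rw [← sum_mul, hμ]

theorem sum_mul_le_of_stationary {μ : S → ℝ} {P : S → S → ℝ} (hμ0 : ∀ s, 0 ≤ μ s)
    (hμ1 : ∑ s, μ s = 1) (hμ : ∀ s', ∑ s, μ s * P s s' = μ s') {c h : S → ℝ} {ρ : ℝ}
    (hc : ∀ s, c s + ∑ s', P s s' * h s' ≤ ρ + h s) :
    ∑ s, μ s * c s ≤ ρ := by
  have hsum : ∑ s, μ s * (c s + ∑ s', P s s' * h s') ≤ ∑ s, μ s * (ρ + h s) :=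
    sum_le_sum fun s _ => mul_le_mul_of_nonneg_left (hc s) (hμ0 s)
  simp_rw [mul_add, sum_add_distrib, sum_mul_sum_mul_eq_of_stationary hμ, ← sum_mul, hμ1] at hsum
  linarith

theorem le_sum_mul_of_stationary {μ : S → ℝ} {P : S → S → ℝ} (hμ0 : ∀ s, 0 ≤ μ s)
    (hμ1 : ∑ s, μ s = 1) (hμ : ∀ s', ∑ s, μ s * P s s' = μ s') {c h : S → ℝ} {ρ : ℝ}
    (hc : ∀ s, ρ + h s ≤ c s + ∑ s', P s s' * h s') :
    ρ ≤ ∑ s, μ s * c s := by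
  have := sum_mul_le_of_stationary (c := -c) (h := -h) (ρ := -ρ) hμ0 hμ1 hμ fun s => by
    simp only [Pi.neg_apply, mul_neg, sum_neg_distrib]
    linarith [hc s]
  simp only [Pi.neg_apply, mul_neg, sum_neg_distrib] at this
  linarith

end Averaging

section Span

variable {S : Type*} [Fintype S] [Nonempty S]

theorem inf'_univ_le_sup'_univ (f : S → ℝ) :
    univ.inf' univ_nonempty f ≤ univ.sup' univ_nonempty f :=
  (inf'_le f (mem_univ (Classical.arbitrary S))).trans (le_sup' f (mem_univ _))

-- Equal total mass lets us shift `f` by its minimum without changing the difference.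
theorem sum_mul_sub_sum_mul_le_sum_abs_mul_span {q q' : S → ℝ} (hq : ∑ s, q s = ∑ s, q' s)
    (f : S → ℝ) :
    ∑ s, q s * f s - ∑ s, q' s * f s ≤
      (∑ s, |q s - q' s|) * (univ.sup' univ_nonempty f - univ.inf' univ_nonempty f) := by
  set m := univ.inf' univ_nonempty f
  have hshift : ∑ s, q s * f s - ∑ s, q' s * f s = ∑ s, (q s - q' s) * (f s - m) := by
    simp_rw [mul_sub, sub_mul, sum_sub_distrib, ← sum_mul, hq]
    ring
  rw [hshift, sum_mul]
  refine sum_le_sum fun s _ => ?_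
  have hm : 0 ≤ f s - m := sub_nonneg.2 (inf'_le f (mem_univ s))
  calc (q s - q' s) * (f s - m) ≤ |q s - q' s| * (f s - m) :=
        mul_le_mul_of_nonneg_right (le_abs_self _) hm
    _ ≤ |q s - q' s| * (univ.sup' univ_nonempty f - m) :=
        mul_le_mul_of_nonneg_left (sub_le_sub_right (le_sup' f (mem_univ s)) m) (abs_nonneg _)

end Span

theorem bellman_epsilon_approximation_aggregated_general
    {S Sb A : Type*} [Fintype S] [Nonempty S] [Fintype Sb] [DecidableEq Sb]
    [Fintype A] [Nonempty A]
    (α : S → Sb)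
    (r : S → A → ℝ) (rbar : Sb → A → ℝ)
    (p : S → A → S → ℝ) (pbar : Sb → A → Sb → ℝ)
    (hp1 : ∀ s a, ∑ s', p s a s' = 1)
    (ε : ℝ) (hε : 0 < ε)
    (hr : ∀ s a, |rbar (α s) a - r s a| < ε)
    (ρ D : ℝ) (lam : S → ℝ)
    (hOpt : ∀ s, ρ + lam s =
      univ.sup' univ_nonempty (fun a => r s a + ∑ s', p s a s' * lam s'))
    (hspan : univ.sup' univ_nonempty lam - univ.inf' univ_nonempty lam ≤ D)
    (π : S → A)
    (hπ : ∀ s, r s (π s) + ∑ s', p s (π s) s' * lam s' =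
      univ.sup' univ_nonempty (fun a => r s a + ∑ s', p s a s' * lam s'))
    (ρbar : ℝ) (lambar : Sb → ℝ)
    (hOptbar : ∀ sb a, ρbar + lambar sb ≥ rbar sb a + ∑ sb', pbar sb a sb' * lambar sb')
    (p' : S → S → ℝ)
    (hp'1 : ∀ s, ∑ s', p' s s' = 1)
    (hp'agg : ∀ s sb', ∑ s' ∈ univ.filter (fun s' => α s' = sb'), p' s s' =
      pbar (α s) (π s) sb')
    (hp'close : ∀ s, ∑ s', |p s (π s) s' - p' s s'| < ε)
    (μ' : S → ℝ)
    (hμ0 : ∀ s, 0 ≤ μ' s) (hμ1 : ∑ s, μ' s = 1)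
    (hμstat : ∀ s', ∑ s, μ' s * p' s s' = μ' s') :
    ρbar ≥ ρ - ε * (D + 1) := by
  have hupper : ∑ s, μ' s * r s (π s) ≤ ρbar + ε := by
    refine sum_mul_le_of_stationary hμ0 hμ1 hμstat (h := fun s => lambar (α s)) fun s => ?_
    rw [sum_mul_comp_eq_sum_mul_of_sum_fiber_eq (hp'agg s)]
    linarith [hOptbar (α s) (π s), (abs_lt.1 (hr s (π s))).1]
  have hdrift : ∀ s, ∑ s', p s (π s) s' * lam s' ≤ ∑ s', p' s s' * lam s' + ε * D := fun s => by
    have := (sum_mul_sub_sum_mul_le_sum_abs_mul_span ((hp1 s (π s)).trans (hp'1 s).symm) lam).trans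
      (mul_le_mul (hp'close s).le hspan (sub_nonneg.2 (inf'_univ_le_sup'_univ lam)) hε.le)
    linarith
  have hlower : ρ - ε * D ≤ ∑ s, μ' s * r s (π s) :=
    le_sum_mul_of_stationary hμ0 hμ1 hμstat (h := lam) fun s => by
      linarith [(hπ s).trans (hOpt s).symm, hdrift s]
  linarith

/-- Lower-bound direction of Theorem 1 in Bellman-equation form: if the MDP `(r̄, p̄)` on
the aggregated state space `S̄` is an `ε`-approximation of the MDP `(r, p)` on `S` via the
surjection `α`, `(ρ, λ, π)` solve the optimality equation of `(r, p)` with `span λ ≤ D`,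
`(ρ̄, λ̄)` is superharmonic for `(r̄, p̄)`, and `p'` is an auxiliary row-stochastic matrix
on `S` whose aggregation under `α` equals `p̄(·, π(·), ·)` and which is `ε`-close in ℓ1 to
`p(·, π(·), ·)`, with stationary distribution `μ'`, then `ρ̄ ≥ ρ - ε (D + 1)`. -/
theorem bellman_epsilon_approximation_aggregated
    {S Sb A : Type*} [Fintype S] [Nonempty S] [Fintype Sb] [Nonempty Sb] [DecidableEq Sb]
    [Fintype A] [Nonempty A]
    (α : S → Sb) (hα : Function.Surjective α)
    (r : S → A → ℝ) (rbar : Sb → A → ℝ)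
    (p : S → A → S → ℝ) (pbar : Sb → A → Sb → ℝ)
    (hp0 : ∀ s a s', 0 ≤ p s a s') (hp1 : ∀ s a, ∑ s', p s a s' = 1)
    (hpbar0 : ∀ sb a sb', 0 ≤ pbar sb a sb') (hpbar1 : ∀ sb a, ∑ sb', pbar sb a sb' = 1)
    (ε : ℝ) (hε : 0 < ε)
    (hr : ∀ s a, |rbar (α s) a - r s a| < ε)
    (hpdiff : ∀ s a, ∑ sb', |pbar (α s) a sb' -
      ∑ s' ∈ univ.filter (fun s' => α s' = sb'), p s a s'| < ε)
    (ρ D : ℝ) (lam : S → ℝ)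
    (hOpt : ∀ s, ρ + lam s =
      univ.sup' univ_nonempty (fun a => r s a + ∑ s', p s a s' * lam s'))
    (hspan : univ.sup' univ_nonempty lam - univ.inf' univ_nonempty lam ≤ D)
    (π : S → A)
    (hπ : ∀ s, r s (π s) + ∑ s', p s (π s) s' * lam s' =
      univ.sup' univ_nonempty (fun a => r s a + ∑ s', p s a s' * lam s'))
    (ρbar : ℝ) (lambar : Sb → ℝ)
    (hOptbar : ∀ sb a, ρbar + lambar sb ≥ rbar sb a + ∑ sb', pbar sb a sb' * lambar sb')
    (p' : S → S → ℝ)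
    (hp'0 : ∀ s s', 0 ≤ p' s s') (hp'1 : ∀ s, ∑ s', p' s s' = 1)
    (hp'agg : ∀ s sb', ∑ s' ∈ univ.filter (fun s' => α s' = sb'), p' s s' =
      pbar (α s) (π s) sb')
    (hp'close : ∀ s, ∑ s', |p s (π s) s' - p' s s'| < ε)
    (μ' : S → ℝ)
    (hμ0 : ∀ s, 0 ≤ μ' s) (hμ1 : ∑ s, μ' s = 1)
    (hμstat : ∀ s', ∑ s, μ' s * p' s s' = μ' s') :
    ρbar ≥ ρ - ε * (D + 1) :=
  bellman_epsilon_approximation_aggregated_general α r rbar p pbar hp1 ε hε hr ρ D lam hOpt hspan π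
    hπ ρbar lambar hOptbar p' hp'1 hp'agg hp'close μ' hμ0 hμ1 hμstat
end

section
/- Let S be a finite nonempty set, r, r̄ : S → ℝ, and let p, p̄ : S → S → ℝ be row-stochastic matrices. Suppose ρ ∈ ℝ and λ : S → ℝ satisfy the Poisson equation for (r,p): for all s, ρ + λ(s) = r(s) + Σ_{s'} p(s,s')·λ(s'); suppose span(λ) ≤ D; and suppose for every s, |r(s) − r̄(s)| < ε and Σ_{s'} |p(s,s') − p̄(s,s')| < ε, where ε > 0 and D ≥ 0. Then for every ℓ ≥ 1 and every sequence of states s_1, s_2, …, s_{ℓ+1} in S: ℓ·ρ − Σ_{τ=1}^{ℓ} r̄(s_τ) < ℓ·ε·(D + 1) + Σ_{τ=1}^{ℓ} ( Σ_{s'} p̄(s_τ,s')·λ(s') − λ(s_{τ+1}) ) + D. -/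
open Finset

/-- Deterministic pathwise decomposition at the heart of Lemma 1 (appendix): along any
trajectory `s₁, …, s_{ℓ+1}`, the shortfall of the perturbed rewards `r̄` relative to `ℓρ`
is less than `ℓε(D+1)` plus the telescoping martingale-difference sum plus `D`. -/
theorem pathwise_regret_decomposition
    {S : Type*} [Fintype S] [Nonempty S]
    (r rbar : S → ℝ) (p pbar : S → S → ℝ)
    (hp0 : ∀ s s', 0 ≤ p s s') (hp1 : ∀ s, ∑ s', p s s' = 1)
    (hpbar0 : ∀ s s', 0 ≤ pbar s s') (hpbar1 : ∀ s, ∑ s', pbar s s' = 1)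
    (ρ D ε : ℝ) (lam : S → ℝ)
    (hPoisson : ∀ s, ρ + lam s = r s + ∑ s', p s s' * lam s')
    (hD : 0 ≤ D)
    (hspan : univ.sup' univ_nonempty lam - univ.inf' univ_nonempty lam ≤ D)
    (hε : 0 < ε)
    (hr : ∀ s, |r s - rbar s| < ε)
    (hpdiff : ∀ s, ∑ s', |p s s' - pbar s s'| < ε)
    (ℓ : ℕ) (hℓ : 1 ≤ ℓ) (st : ℕ → S) :
    (ℓ : ℝ) * ρ - ∑ τ ∈ Icc 1 ℓ, rbar (st τ) <
      (ℓ : ℝ) * ε * (D + 1) +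
        (∑ τ ∈ Icc 1 ℓ, ((∑ s', pbar (st τ) s' * lam s') - lam (st (τ + 1)))) + D := by
  set m := univ.inf' univ_nonempty lam with hm
  have hlam_le : ∀ s : S, lam s - m ≤ D := by
    intro s
    have h1 : lam s ≤ univ.sup' univ_nonempty lam := le_sup' _ (mem_univ s)
    linarith
  have hlam_nn : ∀ s : S, 0 ≤ lam s - m := fun s =>
    sub_nonneg.2 (inf'_le _ (mem_univ s))
  have key : ∀ τ : ℕ, ρ - rbar (st τ) <
      ε * (D + 1) + ((∑ s', pbar (st τ) s' * lam s') - lam (st (τ + 1)))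
        + (lam (st (τ + 1)) - lam (st τ)) := by
    intro τ
    set s := st τ with hs
    have hP := hPoisson s
    have h1 : r s - rbar s < ε := lt_of_le_of_lt (le_abs_self _) (hr s)
    have h2 : (∑ s', (p s s' - pbar s s') * lam s') ≤ ε * D := by
      have expand : (∑ s', (p s s' - pbar s s') * lam s')
          = ∑ s', (p s s' - pbar s s') * (lam s' - m) := by
        simp only [mul_sub, Finset.sum_sub_distrib, ← Finset.sum_mul, sub_mul,
          hp1, hpbar1]
        ring
      rw [expand]
      calc ∑ s', (p s s' - pbar s s') * (lam s' - m)
          ≤ ∑ s', |p s s' - pbar s s'| * D :=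
            Finset.sum_le_sum (fun i _ => by
              calc (p s i - pbar s i) * (lam i - m)
                  ≤ |p s i - pbar s i| * (lam i - m) :=
                    mul_le_mul_of_nonneg_right (le_abs_self _) (hlam_nn i)
                _ ≤ |p s i - pbar s i| * D :=
                    mul_le_mul_of_nonneg_left (hlam_le i) (abs_nonneg _))
        _ = (∑ s', |p s s' - pbar s s'|) * D := by rw [Finset.sum_mul]
        _ ≤ ε * D := mul_le_mul_of_nonneg_right (le_of_lt (hpdiff s)) hD
    have hsplit : ∑ s', (p s s' - pbar s s') * lam s'
        = (∑ s', p s s' * lam s') - ∑ s', pbar s s' * lam s' := by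
      simp [sub_mul, Finset.sum_sub_distrib]
    rw [hsplit] at h2
    nlinarith [h2, h1, hP]
  have hne : (Icc 1 ℓ).Nonempty := by
    refine ⟨1, ?_⟩; simp [hℓ]
  have hsum := Finset.sum_lt_sum_of_nonempty hne
    (f := fun τ => ρ - rbar (st τ))
    (g := fun τ => ε * (D + 1) + ((∑ s', pbar (st τ) s' * lam s') - lam (st (τ + 1)))
        + (lam (st (τ + 1)) - lam (st τ))) (fun i _ => key i)
  have hcard : (Icc 1 ℓ).card = ℓ := by simp
  have tel : ∀ n : ℕ, ∑ τ ∈ Icc 1 n, (lam (st (τ + 1)) - lam (st τ))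
      = lam (st (n + 1)) - lam (st 1) := by
    intro n
    induction n with
    | zero => simp
    | succ k ih =>
      rw [Finset.sum_Icc_succ_top (by omega), ih]; ring
  have hlhs : ∑ τ ∈ Icc 1 ℓ, (ρ - rbar (st τ))
      = (ℓ : ℝ) * ρ - ∑ τ ∈ Icc 1 ℓ, rbar (st τ) := by
    rw [Finset.sum_sub_distrib, Finset.sum_const, hcard, nsmul_eq_mul]
  have hrhs : ∑ τ ∈ Icc 1 ℓ, (ε * (D + 1)
        + ((∑ s', pbar (st τ) s' * lam s') - lam (st (τ + 1)))
        + (lam (st (τ + 1)) - lam (st τ)))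
      = (ℓ : ℝ) * ε * (D + 1)
        + (∑ τ ∈ Icc 1 ℓ, ((∑ s', pbar (st τ) s' * lam s') - lam (st (τ + 1))))
        + (lam (st (ℓ + 1)) - lam (st 1)) := by
    rw [Finset.sum_add_distrib, Finset.sum_add_distrib, Finset.sum_const, hcard,
      nsmul_eq_mul, tel]
    ring
  rw [hlhs, hrhs] at hsum
  have hD' : lam (st (ℓ + 1)) - lam (st 1) ≤ D := by
    have h1 : lam (st (ℓ + 1)) ≤ univ.sup' univ_nonempty lam := le_sup' _ (mem_univ _)
    have h2 : m ≤ lam (st 1) := inf'_le _ (mem_univ _)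
    linarith
  linarith
end

section
/- Let S be a finite nonempty set, r, r̄ : S → ℝ, and let p, p̄ : S → S → ℝ be row-stochastic matrices. Suppose ρ ∈ ℝ and λ : S → ℝ satisfy the Poisson equation for (r,p): for all s, ρ + λ(s) = r(s) + Σ_{s'} p(s,s')·λ(s'); suppose span(λ) ≤ D; and suppose for every s, |r(s) − r̄(s)| < ε and Σ_{s'} |p(s,s') − p̄(s,s')| < ε, where ε > 0 and D ≥ 0. Let (Ω, ℱ, P) be a probability space with a filtration (ℱ_n)_{n∈ℕ} and an adapted process X : ℕ → Ω → S satisfying the Markov property with respect to p̄: for every n and every f : S → ℝ, E[f(X_{n+1}) | ℱ_n] = Σ_{s'} p̄(X_n, s')·f(s') almost surely. Then for every ℓ ≥ 1 and every θ ∈ (0,1), with probability at least 1 − θ: ℓ·ρ − Σ_{τ=1}^{ℓ} r̄(X_τ) < ℓ·ε·(D + 1) + D·√(2·ℓ·log(1/θ)) + D. -/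
/-!
Shift `λ` by its minimum so that it takes values in `[0, D]`; the Poisson equation is unchanged.
Summing the Poisson equation along the trajectory writes `ℓρ - ∑ r̄(X_τ)` as the model errors
(less than `ε(D + 1)` per step), plus the boundary term `λ(X_{ℓ+1}) - λ(X_1) ≤ D`, plus
`M_ℓ = ∑ (p̄λ)(X_τ) - λ(X_{τ+1})`. By the Markov property the increments of `M` are centred given
the past, and they lie in `[-D, D]`, so Hoeffding's lemma bounds `E exp(t M_ℓ)` by
`exp(ℓ D² t² / 2)`; the Chernoff bound (Azuma–Hoeffding) then gives
`P(M_ℓ > D √(2ℓ log(1/θ))) ≤ θ`.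
-/

open Finset MeasureTheory ProbabilityTheory Real
open scoped Matrix NNReal

lemma sum_mul_exp_le_of_mem_Icc {S : Type*} [Fintype S] {w d : S → ℝ} {a b : ℝ}
    (hw0 : ∀ s, 0 ≤ w s) (hw1 : ∑ s, w s = 1) (hd : ∀ s, d s ∈ Set.Icc a b)
    (hmean : ∑ s, w s * d s = 0) (t : ℝ) :
    ∑ s, w s * exp (t * d s) ≤ exp (((b - a) / 2) ^ 2 * t ^ 2 / 2) := by
  let _ : MeasurableSpace S := ⊤
  set μ : Measure S := ∑ s, ENNReal.ofReal (w s) • Measure.dirac s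
  have hint (f : S → ℝ) : ∫ x, f x ∂μ = ∑ s, w s * f s := by
    rw [integral_finsetSum_measure fun s _ =>
      Integrable.of_finite.smul_measure ENNReal.ofReal_ne_top]
    simp [integral_smul_measure, hw0]
  have : IsProbabilityMeasure μ :=
    ⟨by simp [μ, ← ENNReal.ofReal_sum_of_nonneg fun s _ => hw0 s, hw1]⟩
  have := (hasSubgaussianMGF_of_mem_Icc_of_integral_eq_zero (μ := μ)
    (measurable_of_finite d).aemeasurable (ae_of_all _ hd) (by rwa [hint])).mgf_le t
  rwa [mgf, hint, NNReal.coe_pow, NNReal.coe_div, coe_nnnorm, norm_eq_abs, div_pow, sq_abs,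
    ← div_pow] at this

lemma ProbabilityTheory.HasSubgaussianMGF.measureReal_sqrt_lt_le {Ω : Type*}
    {mΩ : MeasurableSpace Ω} {μ : Measure Ω} [IsFiniteMeasure μ] {Y : Ω → ℝ} {c : ℝ≥0}
    (hY : HasSubgaussianMGF Y c μ) {θ : ℝ} (hθ0 : 0 < θ) (hθ1 : θ ≤ 1) :
    μ.real {ω | √(2 * c * log (1 / θ)) < Y ω} ≤ θ := by
  have hlog : 0 ≤ log (1 / θ) := log_nonneg (one_le_one_div hθ0 hθ1)
  rcases eq_zero_or_pos c with rfl | hc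
  -- for `c = 0` the Chernoff bound is trivial, but `Y = 0` a.e. and the inequality is strict
  · have hnull : μ {ω | 0 < Y ω} = 0 :=
      measure_mono_null (fun ω (hω : 0 < Y ω) => hω.ne')
        (ae_iff.1 hY.ae_eq_zero_of_hasSubgaussianMGF_zero)
    simp [measureReal_def, hnull, hθ0.le]
  · calc μ.real {ω | √(2 * c * log (1 / θ)) < Y ω}
        ≤ μ.real {ω | √(2 * c * log (1 / θ)) ≤ Y ω} :=
          measureReal_mono (Set.ofPred_subset_ofPred.2 fun _ => le_of_lt)
      _ ≤ exp (-√(2 * c * log (1 / θ)) ^ 2 / (2 * c)) := hY.measure_ge_le (sqrt_nonneg _)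
      _ = θ := by
          rw [sq_sqrt (by positivity), neg_div, mul_div_cancel_left₀ _ (by positivity),
            one_div, log_inv, neg_neg, exp_log hθ0]

section StochasticMatrix

variable {S : Type*} [Fintype S] {q : S → S → ℝ} {h : S → ℝ}

lemma mulVec_apply_mem_Icc (hq0 : ∀ s s', 0 ≤ q s s') (hq1 : ∀ s, ∑ s', q s s' = 1)
    {a b : ℝ} (hh : ∀ s, h s ∈ Set.Icc a b) (s : S) : (q *ᵥ h) s ∈ Set.Icc a b := by
  have hconst (c : ℝ) : ∑ s', q s s' * c = c := by rw [← sum_mul, hq1, one_mul]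
  constructor
  · calc a = ∑ s', q s s' * a := (hconst a).symm
      _ ≤ (q *ᵥ h) s := sum_le_sum fun s' _ => mul_le_mul_of_nonneg_left (hh s').1 (hq0 s s')
  · calc (q *ᵥ h) s ≤ ∑ s', q s s' * b :=
          sum_le_sum fun s' _ => mul_le_mul_of_nonneg_left (hh s').2 (hq0 s s')
      _ = b := hconst b

lemma mulVec_sub_const_apply (hq1 : ∀ s, ∑ s', q s s' = 1) (c : ℝ) (s : S) :
    (q *ᵥ fun s' => h s' - c) s = (q *ᵥ h) s - c := by
  simp only [Matrix.mulVec, dotProduct, mul_sub, sum_sub_distrib, ← sum_mul, hq1, one_mul]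

lemma mulVec_apply_sub_mulVec_apply_le {q' : S → S → ℝ} {D : ℝ} (hh : ∀ s, |h s| ≤ D)
    (s : S) : (q *ᵥ h) s - (q' *ᵥ h) s ≤ (∑ s', |q s s' - q' s s'|) * D := by
  simp only [Matrix.mulVec, dotProduct, ← sum_sub_distrib, sum_mul, ← sub_mul]
  refine sum_le_sum fun s' _ => ?_
  calc (q s s' - q' s s') * h s' ≤ |(q s s' - q' s s') * h s'| := le_abs_self _
    _ ≤ |q s s' - q' s s'| * D := by
        rw [abs_mul]; exact mul_le_mul_of_nonneg_left (hh s') (abs_nonneg _)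

lemma sum_mul_exp_mul_sub_le (hq0 : ∀ s s', 0 ≤ q s s') (hq1 : ∀ s, ∑ s', q s s' = 1)
    {D : ℝ} (hh : ∀ s, h s ∈ Set.Icc 0 D) (s : S) (t : ℝ) :
    ∑ s', q s s' * exp (t * ((q *ᵥ h) s - h s')) ≤ exp (D ^ 2 * t ^ 2 / 2) := by
  have hqh := mulVec_apply_mem_Icc hq0 hq1 hh s
  convert sum_mul_exp_le_of_mem_Icc (hq0 s) (hq1 s) (d := fun s' => (q *ᵥ h) s - h s')
    (a := -D) (b := D)
    (fun s' => ⟨by linarith [hqh.1, (hh s').2], by linarith [hqh.2, (hh s').1]⟩) ?_ t using 3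
  · ring
  · simp only [mul_sub, sum_sub_distrib, ← sum_mul, hq1, one_mul]
    exact sub_self _

end StochasticMatrix

lemma measurable_comp_of_measurableSet_eq {S Ω : Type*} [Finite S] {m : MeasurableSpace Ω}
    {Y : Ω → S} (hY : ∀ s, MeasurableSet[m] {ω | Y ω = s}) (f : S → ℝ) :
    Measurable[m] fun ω => f (Y ω) :=
  let _ : MeasurableSpace S := ⊤
  (measurable_of_finite f).comp (measurable_to_countable' hY)

structure IsMarkovChain {S Ω : Type*} [Fintype S] {mΩ : MeasurableSpace Ω} (P : Measure Ω)
    (ℱ : Filtration ℕ mΩ) (X : ℕ → Ω → S) (q : S → S → ℝ) : Prop where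
  measurableSet_eq : ∀ n s, MeasurableSet[ℱ n] {ω | X n ω = s}
  condExp_comp_succ : ∀ n (f : S → ℝ),
    P[fun ω => f (X (n + 1) ω)|ℱ n] =ᵐ[P] fun ω => (q *ᵥ f) (X n ω)

/-- `M_n = ∑_{τ=1}^{n} ((q h)(X_τ) - h(X_{τ+1}))`: a martingale (for the filtration shifted by one)
when `X` is a Markov chain with transition matrix `q`, since `E[h(X_{τ+1}) | ℱ_τ] = (q h)(X_τ)`. -/
def transitionMartingale {S Ω : Type*} [Fintype S] (q : S → S → ℝ) (h : S → ℝ)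
    (X : ℕ → Ω → S) (n : ℕ) (ω : Ω) : ℝ :=
  ∑ τ ∈ Icc 1 n, ((q *ᵥ h) (X τ ω) - h (X (τ + 1) ω))

section MarkovChain

variable {S Ω : Type*} [Fintype S] {mΩ : MeasurableSpace Ω} {P : Measure Ω}
  {ℱ : Filtration ℕ mΩ} {X : ℕ → Ω → S} {q : S → S → ℝ} {h : S → ℝ}

@[simp]
lemma transitionMartingale_zero : transitionMartingale q h X 0 = 0 := by
  ext ω; simp [transitionMartingale]

lemma transitionMartingale_succ (n : ℕ) (ω : Ω) :
    transitionMartingale q h X (n + 1) ω =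
      transitionMartingale q h X n ω + ((q *ᵥ h) (X (n + 1) ω) - h (X (n + 2) ω)) :=
  sum_Icc_succ_top (Nat.le_add_left 1 n) _

lemma abs_transitionMartingale_le (hq0 : ∀ s s', 0 ≤ q s s') (hq1 : ∀ s, ∑ s', q s s' = 1)
    {D : ℝ} (hh : ∀ s, h s ∈ Set.Icc 0 D) (n : ℕ) (ω : Ω) :
    |transitionMartingale q h X n ω| ≤ n * D := by
  induction n with
  | zero => simp
  | succ n ih =>
    have hqh := mulVec_apply_mem_Icc hq0 hq1 hh (X (n + 1) ω)
    have hstep : |(q *ᵥ h) (X (n + 1) ω) - h (X (n + 2) ω)| ≤ D :=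
      abs_sub_le_iff.2 ⟨by linarith [hqh.2, (hh (X (n + 2) ω)).1],
        by linarith [hqh.1, (hh (X (n + 2) ω)).2]⟩
    rw [transitionMartingale_succ]
    push_cast
    linarith [abs_add_le (transitionMartingale q h X n ω)
      ((q *ᵥ h) (X (n + 1) ω) - h (X (n + 2) ω))]

namespace IsMarkovChain

lemma measurable_comp (hX : IsMarkovChain P ℱ X q) (n : ℕ) (f : S → ℝ) :
    Measurable[ℱ n] fun ω => f (X n ω) :=
  measurable_comp_of_measurableSet_eq (hX.measurableSet_eq n) f

lemma integrable_comp [IsFiniteMeasure P] (hX : IsMarkovChain P ℱ X q) (n : ℕ) (f : S → ℝ) :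
    Integrable (fun ω => f (X n ω)) P :=
  .of_bound ((hX.measurable_comp n f).mono (ℱ.le n) le_rfl).aestronglyMeasurable ‖f‖
    (ae_of_all _ fun _ => norm_le_pi_norm f _)

lemma integrable_mul_comp (hX : IsMarkovChain P ℱ X q) {F : Ω → ℝ} (hF : Integrable F P)
    (n : ℕ) (f : S → ℝ) : Integrable (fun ω => F ω * f (X n ω)) P :=
  hF.mul_bdd ((hX.measurable_comp n f).mono (ℱ.le n) le_rfl).aestronglyMeasurable
    (ae_of_all _ fun _ => norm_le_pi_norm f _)

lemma integral_mul_comp_succ [IsFiniteMeasure P] (hX : IsMarkovChain P ℱ X q) {n : ℕ}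
    {F : Ω → ℝ} (hFm : StronglyMeasurable[ℱ n] F) (hF : Integrable F P) (f : S → ℝ) :
    ∫ ω, F ω * f (X (n + 1) ω) ∂P = ∫ ω, F ω * (q *ᵥ f) (X n ω) ∂P := by
  calc ∫ ω, F ω * f (X (n + 1) ω) ∂P
      = ∫ ω, (P[fun ω => F ω * f (X (n + 1) ω)|ℱ n]) ω ∂P :=
        (integral_condExp (ℱ.le n)).symm
    _ = ∫ ω, F ω * (P[fun ω => f (X (n + 1) ω)|ℱ n]) ω ∂P :=
        integral_congr_ae (condExp_mul_of_stronglyMeasurable_left hFm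
          (hX.integrable_mul_comp hF (n + 1) f) (hX.integrable_comp (n + 1) f))
    _ = ∫ ω, F ω * (q *ᵥ f) (X n ω) ∂P := by
        refine integral_congr_ae ?_
        filter_upwards [hX.condExp_comp_succ n f] with ω hω
        rw [hω]

lemma measurable_transitionMartingale (hX : IsMarkovChain P ℱ X q) (h : S → ℝ) (n : ℕ) :
    Measurable[ℱ (n + 1)] (transitionMartingale q h X n) := by
  refine Finset.measurable_sum _ fun τ hτ => ?_
  have hτn : τ ≤ n := (mem_Icc.1 hτ).2
  exact ((hX.measurable_comp τ _).mono (ℱ.mono (by omega)) le_rfl).sub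
    ((hX.measurable_comp (τ + 1) h).mono (ℱ.mono (by omega)) le_rfl)

lemma integrable_exp_mul_transitionMartingale [IsFiniteMeasure P] (hX : IsMarkovChain P ℱ X q)
    (hq0 : ∀ s s', 0 ≤ q s s') (hq1 : ∀ s, ∑ s', q s s' = 1) {D : ℝ}
    (hh : ∀ s, h s ∈ Set.Icc 0 D) (n : ℕ) (t : ℝ) :
    Integrable (fun ω => exp (t * transitionMartingale q h X n ω)) P :=
  integrable_exp_mul_of_mem_Icc
    ((hX.measurable_transitionMartingale h n).mono (ℱ.le _) le_rfl).aemeasurable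
    (ae_of_all _ fun ω => abs_le.1 (abs_transitionMartingale_le hq0 hq1 hh n ω))

lemma mgf_transitionMartingale_succ_le [IsProbabilityMeasure P] (hX : IsMarkovChain P ℱ X q)
    (hq0 : ∀ s s', 0 ≤ q s s') (hq1 : ∀ s, ∑ s', q s s' = 1) {D : ℝ}
    (hh : ∀ s, h s ∈ Set.Icc 0 D) (n : ℕ) (t : ℝ) :
    mgf (transitionMartingale q h X (n + 1)) P t ≤
      mgf (transitionMartingale q h X n) P t * exp (D ^ 2 * t ^ 2 / 2) := by
  set M := transitionMartingale q h X
  set g := q *ᵥ h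
  -- split off the only factor that is not `ℱ (n + 1)`-measurable, `exp (-t h(X_{n+2}))`
  set F : Ω → ℝ := fun ω => exp (t * M n ω) * exp (t * g (X (n + 1) ω))
  set f : S → ℝ := fun s' => exp (-(t * h s'))
  have hexp := hX.integrable_exp_mul_transitionMartingale hq0 hq1 hh n t
  have hFm : StronglyMeasurable[ℱ (n + 1)] F :=
    ((measurable_exp.comp ((hX.measurable_transitionMartingale h n).const_mul t)).mul
      (measurable_exp.comp ((hX.measurable_comp (n + 1) g).const_mul t))).stronglyMeasurable
  have hF : Integrable F P := hX.integrable_mul_comp hexp (n + 1) fun u => exp (t * g u)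
  have hsplit (ω : Ω) : exp (t * M (n + 1) ω) = F ω * f (X (n + 2) ω) := by
    simp only [F, f, M, g, transitionMartingale_succ, ← exp_add]
    ring_nf
  have hbound (ω : Ω) :
      F ω * (q *ᵥ f) (X (n + 1) ω) ≤ exp (t * M n ω) * exp (D ^ 2 * t ^ 2 / 2) := by
    calc F ω * (q *ᵥ f) (X (n + 1) ω)
        = exp (t * M n ω) * ∑ s', q (X (n + 1) ω) s' * exp (t * (g (X (n + 1) ω) - h s')) := by
          simp only [F, f, Matrix.mulVec, dotProduct, mul_sum]
          refine sum_congr rfl fun s' _ => ?_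
          rw [mul_sub, sub_eq_add_neg, exp_add]
          ring
      _ ≤ exp (t * M n ω) * exp (D ^ 2 * t ^ 2 / 2) :=
          mul_le_mul_of_nonneg_left (sum_mul_exp_mul_sub_le hq0 hq1 hh _ t) (exp_pos _).le
  calc mgf (M (n + 1)) P t = ∫ ω, F ω * f (X (n + 1 + 1) ω) ∂P :=
        integral_congr_ae (ae_of_all _ hsplit)
    _ = ∫ ω, F ω * (q *ᵥ f) (X (n + 1) ω) ∂P := hX.integral_mul_comp_succ hFm hF f
    _ ≤ ∫ ω, exp (t * M n ω) * exp (D ^ 2 * t ^ 2 / 2) ∂P :=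
        integral_mono (hX.integrable_mul_comp hF (n + 1) _) (hexp.mul_const _) hbound
    _ = mgf (M n) P t * exp (D ^ 2 * t ^ 2 / 2) := integral_mul_const _ _

lemma hasSubgaussianMGF_transitionMartingale [IsProbabilityMeasure P]
    (hX : IsMarkovChain P ℱ X q) (hq0 : ∀ s s', 0 ≤ q s s') (hq1 : ∀ s, ∑ s', q s s' = 1)
    {D : ℝ≥0} (hh : ∀ s, h s ∈ Set.Icc 0 (D : ℝ)) (n : ℕ) :
    HasSubgaussianMGF (transitionMartingale q h X n) (n * D ^ 2) P where
  integrable_exp_mul := hX.integrable_exp_mul_transitionMartingale hq0 hq1 hh n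
  mgf_le t := by
    induction n with
    | zero => simp [mgf]
    | succ n ih =>
      calc mgf (transitionMartingale q h X (n + 1)) P t
          ≤ mgf (transitionMartingale q h X n) P t * exp ((D : ℝ) ^ 2 * t ^ 2 / 2) :=
            hX.mgf_transitionMartingale_succ_le hq0 hq1 hh n t
        _ ≤ exp (↑(n * D ^ 2) * t ^ 2 / 2) * exp ((D : ℝ) ^ 2 * t ^ 2 / 2) := by gcongr
        _ = exp (↑((n + 1 : ℕ) * D ^ 2) * t ^ 2 / 2) := by
            rw [← exp_add]
            push_cast
            ring_nf

lemma measure_lt_transitionMartingale_le [IsProbabilityMeasure P] (hX : IsMarkovChain P ℱ X q)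
    (hq0 : ∀ s s', 0 ≤ q s s') (hq1 : ∀ s, ∑ s', q s s' = 1) {D : ℝ≥0}
    (hh : ∀ s, h s ∈ Set.Icc 0 (D : ℝ)) {θ : ℝ} (hθ0 : 0 < θ) (hθ1 : θ ≤ 1) (n : ℕ) :
    P {ω | D * √(2 * n * log (1 / θ)) < transitionMartingale q h X n ω} ≤ ENNReal.ofReal θ := by
  have hsqrt : √(2 * ((n * D ^ 2 : ℝ≥0) : ℝ) * log (1 / θ)) = D * √(2 * n * log (1 / θ)) := by
    rw [show 2 * ((n * D ^ 2 : ℝ≥0) : ℝ) * log (1 / θ) = (D : ℝ) ^ 2 * (2 * n * log (1 / θ))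
      by push_cast; ring, sqrt_mul (sq_nonneg _), sqrt_sq D.coe_nonneg]
  have := (hX.hasSubgaussianMGF_transitionMartingale hq0 hq1 hh n).measureReal_sqrt_lt_le hθ0 hθ1
  rwa [hsqrt, measureReal_def, ← ENNReal.le_ofReal_iff_toReal_le (measure_ne_top _ _) hθ0.le]
    at this

end IsMarkovChain

end MarkovChain

section Shortfall

variable {S Ω : Type*} [Fintype S] {r rbar h : S → ℝ} {p pbar : S → S → ℝ} {ρ : ℝ}

lemma shortfall_eq_of_poisson (hPoisson : ∀ s, ρ + h s = r s + (p *ᵥ h) s) (X : ℕ → Ω → S)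
    (ω : Ω) (n : ℕ) :
    n * ρ - ∑ τ ∈ Icc 1 n, rbar (X τ ω) =
      ∑ τ ∈ Icc 1 n, (r (X τ ω) - rbar (X τ ω) + ((p *ᵥ h) (X τ ω) - (pbar *ᵥ h) (X τ ω)))
        + transitionMartingale pbar h X n ω + (h (X (n + 1) ω) - h (X 1 ω)) := by
  induction n with
  | zero => simp
  | succ n ih =>
    rw [sum_Icc_succ_top (Nat.le_add_left 1 n), sum_Icc_succ_top (Nat.le_add_left 1 n),
      transitionMartingale_succ]
    push_cast
    linarith [hPoisson (X (n + 1) ω)]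

lemma shortfall_lt_of_poisson (hPoisson : ∀ s, ρ + h s = r s + (p *ᵥ h) s) {ε D : ℝ}
    (hD : 0 ≤ D) (hh : ∀ s, h s ∈ Set.Icc 0 D) (hr : ∀ s, |r s - rbar s| < ε)
    (hpdiff : ∀ s, ∑ s', |p s s' - pbar s s'| < ε) (X : ℕ → Ω → S) (ω : Ω) {n : ℕ}
    (hn : 1 ≤ n) :
    n * ρ - ∑ τ ∈ Icc 1 n, rbar (X τ ω) <
      n * ε * (D + 1) + transitionMartingale pbar h X n ω + D := by
  have hstep (u : S) : r u - rbar u + ((p *ᵥ h) u - (pbar *ᵥ h) u) < ε * (D + 1) := by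
    have hdrift := mulVec_apply_sub_mulVec_apply_le (q := p) (q' := pbar)
      (fun s => abs_le.2 ⟨by linarith [(hh s).1], (hh s).2⟩) u
    nlinarith [le_abs_self (r u - rbar u), hr u, hpdiff u]
  have hsum : ∑ τ ∈ Icc 1 n,
      (r (X τ ω) - rbar (X τ ω) + ((p *ᵥ h) (X τ ω) - (pbar *ᵥ h) (X τ ω))) < n * ε * (D + 1) := by
    calc _ < ∑ _τ ∈ Icc 1 n, ε * (D + 1) :=
          sum_lt_sum_of_nonempty (nonempty_Icc.2 hn) fun τ _ => hstep (X τ ω)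
      _ = n * ε * (D + 1) := by simp [mul_assoc]
  rw [shortfall_eq_of_poisson hPoisson X ω n]
  linarith [(hh (X (n + 1) ω)).2, (hh (X 1 ω)).1]

end Shortfall


theorem approximate_model_reward_shortfall_general
    {S : Type*} [Fintype S] [Nonempty S]
    (r rbar : S → ℝ) (p pbar : S → S → ℝ)
    (hp1 : ∀ s, ∑ s', p s s' = 1)
    (hpbar0 : ∀ s s', 0 ≤ pbar s s') (hpbar1 : ∀ s, ∑ s', pbar s s' = 1)
    (ρ D ε : ℝ) (lam : S → ℝ)
    (hPoisson : ∀ s, ρ + lam s = r s + ∑ s', p s s' * lam s')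
    (hD : 0 ≤ D)
    (hspan : univ.sup' univ_nonempty lam - univ.inf' univ_nonempty lam ≤ D)
    (hr : ∀ s, |r s - rbar s| < ε)
    (hpdiff : ∀ s, ∑ s', |p s s' - pbar s s'| < ε)
    {Ω : Type*} {mΩ : MeasurableSpace Ω} (P : Measure Ω) [IsProbabilityMeasure P]
    (ℱ : Filtration ℕ mΩ) (X : ℕ → Ω → S)
    (hadapted : ∀ n s, MeasurableSet[ℱ n] {ω | X n ω = s})
    (hmarkov : ∀ n (f : S → ℝ),
      P[(fun ω => f (X (n + 1) ω))|ℱ n] =ᵐ[P] fun ω => ∑ s', pbar (X n ω) s' * f s')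
    (ℓ : ℕ) (hℓ : 1 ≤ ℓ) (θ : ℝ) (hθ0 : 0 < θ) (hθ1 : θ < 1) :
    ENNReal.ofReal (1 - θ) ≤
      P {ω | (ℓ : ℝ) * ρ - ∑ τ ∈ Icc 1 ℓ, rbar (X τ ω) <
        (ℓ : ℝ) * ε * (D + 1) + D * Real.sqrt (2 * ℓ * Real.log (1 / θ)) + D} := by
  lift D to ℝ≥0 using hD
  set h : S → ℝ := fun s => lam s - univ.inf' univ_nonempty lam
  have hh (s : S) : h s ∈ Set.Icc 0 (D : ℝ) :=
    ⟨sub_nonneg.2 (inf'_le _ (mem_univ s)), by linarith [le_sup' lam (mem_univ s)]⟩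
  have hPoisson' (s : S) : ρ + h s = r s + (p *ᵥ h) s := by
    have hPoisson_s : ρ + lam s = r s + (p *ᵥ lam) s := hPoisson s
    rw [mulVec_sub_const_apply hp1]
    linarith
  have hX : IsMarkovChain P ℱ X pbar := ⟨hadapted, hmarkov⟩
  set M := transitionMartingale pbar h X ℓ
  set t := (D : ℝ) * √(2 * ℓ * log (1 / θ))
  have htail : P {ω | t < M ω} ≤ ENNReal.ofReal θ :=
    hX.measure_lt_transitionMartingale_le hpbar0 hpbar1 hh hθ0 hθ1.le ℓ
  have hshortfall (ω : Ω) : (ℓ : ℝ) * ρ - ∑ τ ∈ Icc 1 ℓ, rbar (X τ ω) <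
      ℓ * ε * (D + 1) + M ω + D :=
    shortfall_lt_of_poisson hPoisson' D.2 hh hr hpdiff X ω hℓ
  have hM : MeasurableSet {ω | t < M ω} :=
    measurableSet_lt measurable_const
      ((hX.measurable_transitionMartingale h ℓ).mono (ℱ.le _) le_rfl)
  calc ENNReal.ofReal (1 - θ) = 1 - ENNReal.ofReal θ := by
        rw [ENNReal.ofReal_sub _ hθ0.le, ENNReal.ofReal_one]
    _ ≤ 1 - P {ω | t < M ω} := tsub_le_tsub_left htail 1
    _ = P {ω | t < M ω}ᶜ := (prob_compl_eq_one_sub hM).symm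
    _ ≤ _ := measure_mono fun ω (hω : ¬ t < M ω) =>
        (hshortfall ω).trans_le (by linarith [not_lt.1 hω])

/-- Lemma 1 of the appendix (fixed-policy form): if the optimal policy of an MDP with
Poisson solution `(ρ, λ)`, `span λ ≤ D`, is run for `ℓ` steps on an `ε`-approximation
`(r̄, p̄)` over the same state space (the trajectory `X` being a Markov chain with
transition matrix `p̄`), then with probability at least `1 - θ` the collected mean rewards
fall short of `ℓρ` by less than `ℓε(D+1) + D √(2 ℓ log(1/θ)) + D`. -/
theorem approximate_model_reward_shortfall
    {S : Type*} [Fintype S] [Nonempty S]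
    (r rbar : S → ℝ) (p pbar : S → S → ℝ)
    (hp0 : ∀ s s', 0 ≤ p s s') (hp1 : ∀ s, ∑ s', p s s' = 1)
    (hpbar0 : ∀ s s', 0 ≤ pbar s s') (hpbar1 : ∀ s, ∑ s', pbar s s' = 1)
    (ρ D ε : ℝ) (lam : S → ℝ)
    (hPoisson : ∀ s, ρ + lam s = r s + ∑ s', p s s' * lam s')
    (hD : 0 ≤ D)
    (hspan : univ.sup' univ_nonempty lam - univ.inf' univ_nonempty lam ≤ D)
    (hε : 0 < ε)
    (hr : ∀ s, |r s - rbar s| < ε)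
    (hpdiff : ∀ s, ∑ s', |p s s' - pbar s s'| < ε)
    {Ω : Type*} {mΩ : MeasurableSpace Ω} (P : Measure Ω) [IsProbabilityMeasure P]
    (ℱ : Filtration ℕ mΩ) (X : ℕ → Ω → S)
    (hadapted : ∀ n s, MeasurableSet[ℱ n] {ω | X n ω = s})
    (hmarkov : ∀ n (f : S → ℝ),
      P[(fun ω => f (X (n + 1) ω))|ℱ n] =ᵐ[P] fun ω => ∑ s', pbar (X n ω) s' * f s')
    (ℓ : ℕ) (hℓ : 1 ≤ ℓ) (θ : ℝ) (hθ0 : 0 < θ) (hθ1 : θ < 1) :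
    ENNReal.ofReal (1 - θ) ≤
      P {ω | (ℓ : ℝ) * ρ - ∑ τ ∈ Icc 1 ℓ, rbar (X τ ω) <
        (ℓ : ℝ) * ε * (D + 1) + D * Real.sqrt (2 * ℓ * Real.log (1 / θ)) + D} :=
  approximate_model_reward_shortfall_general r rbar p pbar hp1 hpbar0 hpbar1 ρ D ε lam hPoisson hD
    hspan hr hpdiff P ℱ X hadapted hmarkov ℓ hℓ θ hθ0 hθ1
end
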